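/- arXiv:2307.08224 — 4 statements merged into one kernel-verified Lean document; each statement's English description precedes it below -/
import Mathlib

section
/- Let X be a combinatorial cell complex labeled by multigraded submodules M_C of a common multigraded module over a field k, with degree-0 inclusion maps i_{C,D} : M_C → M_D whenever α(C,D) ≠ 0, compatible in the sense that i_{C,D} ∘ i_{E,C} = i_{C',D} ∘ i_{E,C'}. Let F_•(X) be the chain complex with F_i(X) = ⊕_{dim C = i} M_C and boundary ∂|_{M_C} = Σ_D α(C,D) i_{C,D}. Then for each multidegree b, the degree-b component H_i(F_•(X))_b is isomorphic to the i-th homology of the subcomplex X_{⪯b} consisting of cells C with (M_C)_b ≠ 0, with each cell C labeled by the k-vector space (M_C)_b. -/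
open scoped Classical

/-- Let X be a combinatorial cell complex labeled by multigraded
submodules M_C of a common multigraded k-vector space V (grading 𝒱 : degs → Submodule
k V, internal direct sum), with inclusions M_C ≤ M_D whenever α(C,D) ≠ 0.  For a
multidegree b, the degree-b component of the i-th homology of F_•(X) (the chain
complex with F_i = ⊕_{dim C = i} M_C and ∂|_{M_C} = Σ_D α(C,D) i_{C,D}) is isomorphic
to the i-th homology of the subcomplex X_{⪯b} of cells C with (M_C)_b ≠ 0, labeled by
the k-vector spaces (M_C)_b = M_C ⊓ 𝒱 b. -/
theorem stmt1 {cells : Type*} [Fintype cells] {degs : Type*}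
    (k : Type*) [Field k] (V : Type*) [AddCommGroup V] [Module k V]
    (𝒱 : degs → Submodule k V) (hgrading : DirectSum.IsInternal 𝒱)
    (dim : cells → ℕ) (α : cells → cells → ℤ)
    (hα : ∀ C D, α C D ≠ 0 → dim D + 1 = dim C)
    (hcomp : ∀ A C, dim A = dim C + 2 → (∑ B : cells, α A B * α B C) = 0)
    (M : cells → Submodule k V)
    (hincl : ∀ C D, α C D ≠ 0 → M C ≤ M D)
    (hhomog : ∀ C, M C = ⨆ b : degs, (M C ⊓ 𝒱 b))
    (b : degs) (i : ℕ) :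
    -- degree-b chains of F_•(X) in homological degree j
    let chains : ℕ → Submodule k (cells → V) := fun j =>
      (⨅ C : cells, Submodule.comap (LinearMap.proj C : (cells → V) →ₗ[k] V)
        (M C ⊓ 𝒱 b)) ⊓
      (⨅ C ∈ {C : cells | dim C ≠ j},
        LinearMap.ker (LinearMap.proj C : (cells → V) →ₗ[k] V))
    let bdry : (cells → V) →ₗ[k] (cells → V) :=
      LinearMap.pi (fun D => ∑ C : cells,
        (α C D) • (LinearMap.proj C : (cells → V) →ₗ[k] V))
    let Z : Submodule k (cells → V) := chains i ⊓ LinearMap.ker bdry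
    let B : Submodule k Z :=
      Submodule.comap Z.subtype (Submodule.map bdry (chains (i + 1)))
    -- the subcomplex X_{⪯b} of cells with (M_C)_b ≠ 0, labeled by (M_C)_b
    let cells' := {C : cells // M C ⊓ 𝒱 b ≠ ⊥}
    let chains' : ℕ → Submodule k (cells' → V) := fun j =>
      (⨅ C : cells', Submodule.comap (LinearMap.proj C : (cells' → V) →ₗ[k] V)
        (M C.1 ⊓ 𝒱 b)) ⊓
      (⨅ C ∈ {C : cells' | dim C.1 ≠ j},
        LinearMap.ker (LinearMap.proj C : (cells' → V) →ₗ[k] V))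
    let bdry' : (cells' → V) →ₗ[k] (cells' → V) :=
      LinearMap.pi (fun D => ∑ C : cells',
        (α C.1 D.1) • (LinearMap.proj C : (cells' → V) →ₗ[k] V))
    let Z' : Submodule k (cells' → V) := chains' i ⊓ LinearMap.ker bdry'
    let B' : Submodule k Z' :=
      Submodule.comap Z'.subtype (Submodule.map bdry' (chains' (i + 1)))
    -- H_i(F_•(X))_b ≅ H_i(X_{⪯b})
    Nonempty ((Z ⧸ B) ≃ₗ[k] (Z' ⧸ B')) := by
  classical
  intro chains bdry Z B cells' chains' bdry' Z' B'
  -- membership characterizations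
  have hmem : ∀ (j : ℕ) (x : cells → V), x ∈ chains j ↔
      (∀ C, x C ∈ M C ⊓ 𝒱 b) ∧ (∀ C, dim C ≠ j → x C = 0) := by
    intro j x
    simp only [chains, Submodule.mem_inf, Submodule.mem_iInf, Submodule.mem_comap,
      LinearMap.mem_ker, LinearMap.proj_apply, Set.mem_setOf_eq]
  have hmem' : ∀ (j : ℕ) (y : cells' → V), y ∈ chains' j ↔
      (∀ C : cells', y C ∈ M C.1 ⊓ 𝒱 b) ∧ (∀ C : cells', dim C.1 ≠ j → y C = 0) := by
    intro j y
    simp only [chains', Submodule.mem_inf, Submodule.mem_iInf, Submodule.mem_comap,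
      LinearMap.mem_ker, LinearMap.proj_apply, Set.mem_setOf_eq]
  have hbapp : ∀ (x : cells → V) (D : cells), bdry x D = ∑ C : cells, α C D • x C := by
    intro x D
    simp [bdry, LinearMap.pi_apply, LinearMap.sum_apply, LinearMap.smul_apply,
      LinearMap.proj_apply]
  have hbapp' : ∀ (y : cells' → V) (D : cells'), bdry' y D = ∑ C : cells', α C.1 D.1 • y C := by
    intro y D
    simp [bdry', LinearMap.pi_apply, LinearMap.sum_apply, LinearMap.smul_apply,
      LinearMap.proj_apply]
  -- restriction and extension-by-zero
  set r : (cells → V) →ₗ[k] (cells' → V) :=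
    LinearMap.pi (fun C' => LinearMap.proj C'.1) with hr
  set e : (cells' → V) →ₗ[k] (cells → V) :=
    LinearMap.pi (fun C => if h : M C ⊓ 𝒱 b ≠ ⊥ then
      (LinearMap.proj (⟨C, h⟩ : cells') : (cells' → V) →ₗ[k] V) else 0) with he
  have hrapp : ∀ (x : cells → V) (C' : cells'), r x C' = x C'.1 := fun x C' => rfl
  have heapp : ∀ (y : cells' → V) (C : cells) (h : M C ⊓ 𝒱 b ≠ ⊥), e y C = y ⟨C, h⟩ := by
    intro y C h
    simp only [he, LinearMap.pi_apply]
    rw [dif_pos h]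
    rfl
  have heapp0 : ∀ (y : cells' → V) (C : cells), M C ⊓ 𝒱 b = ⊥ → e y C = 0 := by
    intro y C h
    simp only [he, LinearMap.pi_apply]
    rw [dif_neg (not_not_intro h)]
    rfl
  have hre : ∀ y : cells' → V, r (e y) = y := by
    intro y; funext C'
    rw [hrapp, heapp y C'.1 C'.2]
  have hsupp : ∀ (j : ℕ) (x : cells → V), x ∈ chains j →
      ∀ C, M C ⊓ 𝒱 b = ⊥ → x C = 0 := by
    intro j x hx C hC
    have := ((hmem j x).1 hx).1 C
    rw [hC] at this
    simpa using this
  have her : ∀ (x : cells → V), (∀ C, M C ⊓ 𝒱 b = ⊥ → x C = 0) → e (r x) = x := by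
    intro x hx; funext C
    by_cases h : M C ⊓ 𝒱 b = ⊥
    · rw [heapp0 _ _ h, hx C h]
    · rw [heapp _ _ h, hrapp]
  -- sum over subtype
  have hsum : ∀ (x : cells → V), (∀ C, M C ⊓ 𝒱 b = ⊥ → x C = 0) → ∀ D : cells,
      ∑ C : cells', α C.1 D • x C.1 = ∑ C : cells, α C D • x C := by
    intro x hx D
    rw [← Finset.sum_subtype (Finset.univ.filter (fun C => M C ⊓ 𝒱 b ≠ ⊥))
      (by simp) (fun C => α C D • x C)]
    refine Finset.sum_subset (Finset.filter_subset _ _) ?_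
    intro C _ hC
    simp only [Finset.mem_filter, Finset.mem_univ, true_and, not_not] at hC
    rw [hx C hC, smul_zero]
  -- boundary commutes with restriction / extension
  have hcommr : ∀ (x : cells → V), (∀ C, M C ⊓ 𝒱 b = ⊥ → x C = 0) →
      bdry' (r x) = r (bdry x) := by
    intro x hx; funext D'
    rw [hbapp', hrapp, hbapp]
    simp only [hrapp]
    exact hsum x hx D'.1
  have hcomme : ∀ (y : cells' → V), (∀ C : cells', y C ∈ M C.1 ⊓ 𝒱 b) →
      bdry (e y) = e (bdry' y) := by
    intro y hy; funext D
    by_cases hD : M D ⊓ 𝒱 b = ⊥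
    · rw [heapp0 _ _ hD, hbapp]
      have : ∀ C : cells, α C D • e y C ∈ M D ⊓ 𝒱 b := by
        intro C
        by_cases hα0 : α C D = 0
        · rw [hα0, zero_smul]; exact Submodule.zero_mem _
        by_cases hC : M C ⊓ 𝒱 b = ⊥
        · rw [heapp0 _ _ hC, smul_zero]; exact Submodule.zero_mem _
        · rw [heapp _ _ hC]
          exact zsmul_mem (inf_le_inf_right (𝒱 b) (hincl C D hα0) (hy ⟨C, hC⟩)) _
      have hmemsum : ∑ C : cells, α C D • e y C ∈ M D ⊓ 𝒱 b :=
        Submodule.sum_mem _ (fun C _ => this C)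
      rw [hD] at hmemsum
      simpa using hmemsum
    · rw [heapp _ _ hD, hbapp, hbapp']
      have : ∀ C : cells', y C = e y C.1 := fun C => (heapp y C.1 C.2).symm
      calc ∑ C : cells, α C D • e y C
          = ∑ C : cells', α C.1 D • e y C.1 := (hsum (e y)
            (fun C hC => heapp0 _ _ hC) D).symm
        _ = ∑ C : cells', α C.1 D • y C := by
            refine Finset.sum_congr rfl fun C _ => ?_
            rw [← this C]
  -- r, e exchange the chain groups
  have hrchains : ∀ (j : ℕ) (x : cells → V), x ∈ chains j → r x ∈ chains' j := by
    intro j x hx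
    obtain ⟨h1, h2⟩ := (hmem j x).1 hx
    exact (hmem' j _).2 ⟨fun C => by rw [hrapp]; exact h1 C.1,
      fun C hC => by rw [hrapp]; exact h2 C.1 hC⟩
  have hechains : ∀ (j : ℕ) (y : cells' → V), y ∈ chains' j → e y ∈ chains j := by
    intro j y hy
    obtain ⟨h1, h2⟩ := (hmem' j y).1 hy
    refine (hmem j _).2 ⟨fun C => ?_, fun C hC => ?_⟩
    · by_cases h : M C ⊓ 𝒱 b = ⊥
      · rw [heapp0 _ _ h]; exact Submodule.zero_mem _
      · rw [heapp _ _ h]; exact h1 ⟨C, h⟩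
    · by_cases h : M C ⊓ 𝒱 b = ⊥
      · rw [heapp0 _ _ h]
      · rw [heapp _ _ h]; exact h2 ⟨C, h⟩ hC
  -- r, e exchange the cycle groups
  have hrZ : ∀ z ∈ Z, r z ∈ Z' := by
    intro z hz
    obtain ⟨hz1, hz2⟩ := Submodule.mem_inf.1 hz
    refine Submodule.mem_inf.2 ⟨hrchains i z hz1, ?_⟩
    rw [LinearMap.mem_ker, hcommr z (hsupp i z hz1), LinearMap.mem_ker.1 hz2, map_zero]
  have heZ : ∀ z' ∈ Z', e z' ∈ Z := by
    intro z' hz'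
    obtain ⟨hz1, hz2⟩ := Submodule.mem_inf.1 hz'
    refine Submodule.mem_inf.2 ⟨hechains i z' hz1, ?_⟩
    rw [LinearMap.mem_ker, hcomme z' ((hmem' i z').1 hz1).1, LinearMap.mem_ker.1 hz2,
      map_zero]
  -- the isomorphism Z ≃ Z'
  let φ : Z ≃ₗ[k] Z' := LinearEquiv.ofLinear
    (LinearMap.restrict r (p := Z) (q := Z') hrZ)
    (LinearMap.restrict e (p := Z') (q := Z) heZ)
    (by
      ext z'
      exact congrFun (hre z'.1) _)
    (by
      ext z
      have := her z.1 (hsupp i z.1 (Submodule.mem_inf.1 z.2).1)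
      exact congrFun this _)
  have hφapp : ∀ z : Z, (φ z : cells' → V) = r z.1 := fun z => rfl
  have hφsymm : ∀ z' : Z', (φ.symm z' : cells → V) = e z'.1 := fun z' => rfl
  -- B maps to B'
  have hmap : B.map (φ : Z →ₗ[k] Z') = B' := by
    apply le_antisymm
    · rintro _ ⟨z, hzB, rfl⟩
      obtain ⟨x, hx, hxz⟩ := Submodule.mem_comap.1 hzB
      refine Submodule.mem_comap.2 ⟨r x, hrchains (i + 1) x hx, ?_⟩
      show bdry' (r x) = (φ z : cells' → V)
      rw [hcommr x (hsupp (i + 1) x hx), hφapp]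
      exact congrArg r hxz
    · intro z' hz'
      obtain ⟨y, hy, hyz⟩ := Submodule.mem_comap.1 hz'
      refine ⟨φ.symm z', ?_, by simp⟩
      refine Submodule.mem_comap.2 ⟨e y, hechains (i + 1) y hy, ?_⟩
      show bdry (e y) = (φ.symm z' : cells → V)
      rw [hcomme y ((hmem' (i + 1) y).1 hy).1, hφsymm]
      exact congrArg e hyz
  exact ⟨Submodule.Quotient.equiv B B' φ hmap⟩
end

section
/- Let X be a combinatorial cell complex whose cells C are labeled by monomials m_C in a polynomial ring S over a field, such that m_D divides m_C whenever α(C,D) ≠ 0. If for every monomial m the subcomplex X_{⪯m} of cells C with m_C | m has vanishing reduced homology in all degrees, then the associated labeled chain complex F_•(X) (with free modules S(−deg m_C) in homological degree dim C and boundary maps given by α(C,D)·(m_C/m_D)) is exact in positive homological degrees and H_0(F_•(X)) is isomorphic to the ideal generated by the vertex labels {m_v : v a 0-cell}. -/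
open MvPolynomial

section BSHelpers

open scoped Classical

variable {cells : Type*} [Fintype cells] {n : ℕ} {k : Type*} [Field k]
variable {dim : cells → ℕ} {α : cells → cells → ℤ}

/-- The degree-`b` strand of a polynomial chain. -/
noncomputable def bsStrand (deg : cells → (Fin n →₀ ℕ)) (b : Fin n →₀ ℕ)
    (f : cells → MvPolynomial (Fin n) k) (C : cells) : k :=
  if deg C ≤ b then MvPolynomial.coeff (b - deg C) (f C) else 0

lemma bsStrand_ne_zero {deg : cells → (Fin n →₀ ℕ)} {b : Fin n →₀ ℕ}
    {f : cells → MvPolynomial (Fin n) k} {C : cells} (h : bsStrand deg b f C ≠ 0) :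
    f C ≠ 0 ∧ deg C ≤ b := by
  rw [bsStrand] at h
  split_ifs at h with hle
  · exact ⟨fun h0 => h (by simp [h0]), hle⟩
  · exact absurd rfl h

lemma bs_coeff_bdry (deg : cells → (Fin n →₀ ℕ))
    (hdvd : ∀ C D, α C D ≠ 0 → deg D ≤ deg C)
    (f : cells → MvPolynomial (Fin n) k) (D : cells) (b : Fin n →₀ ℕ) (hDb : deg D ≤ b) :
    MvPolynomial.coeff (b - deg D)
      (∑ C : cells, (α C D : ℤ) • (monomial (deg C - deg D) (1 : k) * f C))
    = ∑ C : cells, (α C D : k) * bsStrand deg b f C := by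
  rw [MvPolynomial.coeff_sum]
  refine Finset.sum_congr rfl fun C _ => ?_
  rw [MvPolynomial.coeff_smul, MvPolynomial.coeff_monomial_mul', bsStrand, zsmul_eq_mul]
  by_cases hCD : α C D = 0
  · simp [hCD]
  · have hd := hdvd C D hCD
    rw [tsub_tsub_tsub_cancel_right hd]
    simp only [tsub_le_tsub_iff_right hDb, one_mul]

lemma bs_sum_eq_zero (deg : cells → (Fin n →₀ ℕ))
    (hdvd : ∀ C D, α C D ≠ 0 → deg D ≤ deg C) {b : Fin n →₀ ℕ} {D : cells}
    (hDb : ¬ deg D ≤ b) (h : cells → k) (hsup : ∀ C, h C ≠ 0 → deg C ≤ b) :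
    (∑ C : cells, (α C D : k) * h C) = 0 := by
  refine Finset.sum_eq_zero fun C _ => ?_
  by_cases hCD : α C D = 0
  · simp [hCD]
  · by_cases hC : h C = 0
    · simp [hC]
    · exact absurd ((hdvd C D hCD).trans (hsup C hC)) hDb

/-- Assembling degreewise witnesses over `k` into a polynomial witness. -/
lemma bs_assemble (deg : cells → (Fin n →₀ ℕ))
    (hdvd : ∀ C D, α C D ≠ 0 → deg D ≤ deg C)
    (f : cells → MvPolynomial (Fin n) k) (j : ℕ)
    (h : ∀ b : Fin n →₀ ℕ, ∃ gb : cells → k,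
      (∀ C, gb C ≠ 0 → dim C = j ∧ deg C ≤ b) ∧
      ∀ D, (∑ C : cells, (α C D : k) * gb C) = bsStrand deg b f D) :
    ∃ g : cells → MvPolynomial (Fin n) k, (∀ C, g C ≠ 0 → dim C = j) ∧
      ∀ D, (∑ C : cells, (α C D : ℤ) • (monomial (deg C - deg D) (1 : k) * g C)) = f D := by
  choose gb hgb1 hgb2 using h
  set B : Finset (Fin n →₀ ℕ) :=
    Finset.univ.biUnion (fun C => (f C).support.image (· + deg C)) with hB
  have hBmem : ∀ (b : Fin n →₀ ℕ) (D : cells), bsStrand deg b f D ≠ 0 → b ∈ B := by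
    intro b D hne
    obtain ⟨hfD, hle⟩ := bsStrand_ne_zero hne
    rw [bsStrand, if_pos hle] at hne
    exact Finset.mem_biUnion.2 ⟨D, Finset.mem_univ _,
      Finset.mem_image.2 ⟨b - deg D, MvPolynomial.mem_support_iff.2 hne,
        tsub_add_cancel_of_le hle⟩⟩
  set g : cells → MvPolynomial (Fin n) k :=
    fun C => ∑ b ∈ B, monomial (b - deg C) (gb b C) with hg
  have key : ∀ (b : Fin n →₀ ℕ) (C : cells), deg C ≤ b →
      MvPolynomial.coeff (b - deg C) (g C) = if b ∈ B then gb b C else 0 := by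
    intro b C hCb
    rw [hg]
    rw [MvPolynomial.coeff_sum]
    have hterm : ∀ b' ∈ B,
        MvPolynomial.coeff (b - deg C) (monomial (b' - deg C) (gb b' C))
          = if b' = b then gb b' C else 0 := by
      intro b' _
      rw [MvPolynomial.coeff_monomial]
      by_cases h0 : gb b' C = 0
      · simp [h0]
      · have hCb' : deg C ≤ b' := (hgb1 b' C h0).2
        by_cases heq : b' = b
        · subst heq; simp
        · have hne : b' - deg C ≠ b - deg C :=
            fun hh => heq ((tsub_left_inj hCb' hCb).1 hh)
          simp [hne, heq]
    rw [Finset.sum_congr rfl hterm, Finset.sum_ite_eq' B b (fun b' => gb b' C)]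
  have hstrand : ∀ (b : Fin n →₀ ℕ) (C : cells),
      bsStrand deg b g C = if b ∈ B then gb b C else 0 := by
    intro b C
    rw [bsStrand]
    split_ifs with hle hbB
    · rw [key b C hle, if_pos hbB]
    · rw [key b C hle, if_neg hbB]
    · by_cases h0 : gb b C = 0
      · exact h0.symm
      · exact absurd (hgb1 b C h0).2 hle
    · rfl
  refine ⟨g, ?_, ?_⟩
  · intro C hC
    by_contra hdim
    apply hC
    rw [hg]
    refine Finset.sum_eq_zero fun b _ => ?_
    have h0 : gb b C = 0 := by
      by_contra h0; exact hdim ((hgb1 b C h0).1)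
    simp [h0]
  · intro D
    apply MvPolynomial.ext
    intro e
    have hDb : deg D ≤ e + deg D := le_add_self
    have he : e + deg D - deg D = e := by simp
    rw [← he, bs_coeff_bdry deg hdvd g D (e + deg D) hDb]
    by_cases hbB : e + deg D ∈ B
    · have : ∀ C : cells, bsStrand deg (e + deg D) g C = gb (e + deg D) C := by
        intro C; rw [hstrand, if_pos hbB]
      calc (∑ C : cells, (α C D : k) * bsStrand deg (e + deg D) g C)
          = ∑ C : cells, (α C D : k) * gb (e + deg D) C := by
            exact Finset.sum_congr rfl fun C _ => by rw [this C]
        _ = bsStrand deg (e + deg D) f D := hgb2 (e + deg D) D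
        _ = MvPolynomial.coeff (e + deg D - deg D) (f D) := by
            rw [bsStrand, if_pos hDb]
    · have h1 : (∑ C : cells, (α C D : k) * bsStrand deg (e + deg D) g C) = 0 := by
        refine Finset.sum_eq_zero fun C _ => ?_
        rw [hstrand, if_neg hbB, mul_zero]
      have h2 : bsStrand deg (e + deg D) f D = 0 := by
        by_contra h0; exact hbB (hBmem _ D h0)
      rw [bsStrand, if_pos hDb] at h2
      rw [h1, h2]

end BSHelpers

/-- Bayer–Sturmfels: Let X be a combinatorial cell complex whose cells
are labeled by monomials m_C (exponent vectors deg C) in S = k[x₁,…,x_n] with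
m_D ∣ m_C whenever α(C,D) ≠ 0.  If for every monomial x^b the subcomplex X_{⪯b} of
cells with m_C ∣ x^b has vanishing reduced homology over k in all degrees, then the
labeled chain complex F_•(X) (with boundary entries α(C,D)·m_C/m_D) is exact in
positive homological degrees and H₀(F_•(X)) ≅ ⟨m_v : v a 0-cell⟩. -/
theorem stmt2 {cells : Type*} [Fintype cells] {n : ℕ} (k : Type*) [Field k]
    (dim : cells → ℕ) (α : cells → cells → ℤ) (deg : cells → (Fin n →₀ ℕ))
    (hα : ∀ C D, α C D ≠ 0 → dim D + 1 = dim C)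
    (hcomp : ∀ A C, dim A = dim C + 2 → (∑ B : cells, α A B * α B C) = 0)
    (hedge : ∀ E, dim E = 1 → (∑ D : cells, α E D) = 0)
    (hdvd : ∀ C D, α C D ≠ 0 → deg D ≤ deg C)
    -- acyclicity of X_{⪯b} over k for every monomial x^b:
    (hacyclic : ∀ b : Fin n →₀ ℕ,
      (∀ i : ℕ, 1 ≤ i → ∀ f : cells → k,
        (∀ C, f C ≠ 0 → dim C = i ∧ deg C ≤ b) →
        (∀ D, (∑ C : cells, (α C D : k) * f C) = 0) →
        ∃ g : cells → k, (∀ C, g C ≠ 0 → dim C = i + 1 ∧ deg C ≤ b) ∧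
          ∀ D, (∑ C : cells, (α C D : k) * g C) = f D) ∧
      (∀ f : cells → k, (∀ C, f C ≠ 0 → dim C = 0 ∧ deg C ≤ b) →
        (∑ v : cells, if dim v = 0 then f v else 0) = 0 →
        ∃ g : cells → k, (∀ C, g C ≠ 0 → dim C = 1 ∧ deg C ≤ b) ∧
          ∀ D, (∑ C : cells, (α C D : k) * g C) = f D) ∧
      ((∃ C, deg C ≤ b) → ∀ c : k, ∃ f : cells → k,
        (∀ C, f C ≠ 0 → dim C = 0 ∧ deg C ≤ b) ∧
        (∑ v : cells, if dim v = 0 then f v else 0) = c)) :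
    let S := MvPolynomial (Fin n) k
    let bdry : (cells → S) → (cells → S) :=
      fun f D => ∑ C : cells, (α C D : ℤ) • (monomial (deg C - deg D) (1 : k) * f C)
    let ε : (cells → S) → S :=
      fun f => ∑ v : cells, if dim v = 0 then monomial (deg v) (1 : k) * f v else 0
    let I : Ideal S := Ideal.span {p | ∃ v : cells, dim v = 0 ∧ p = monomial (deg v) (1 : k)}
    -- exactness in positive homological degrees
    (∀ i : ℕ, 1 ≤ i → ∀ f : cells → S, (∀ C, f C ≠ 0 → dim C = i) →
      bdry f = 0 → ∃ g : cells → S, (∀ C, g C ≠ 0 → dim C = i + 1) ∧ bdry g = f) ∧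
    -- H₀ ≅ I via the augmentation ε: ε maps 0-chains into I, onto I, and its kernel
    -- on 0-chains consists exactly of boundaries
    (∀ f : cells → S, (∀ C, f C ≠ 0 → dim C = 0) → ε f ∈ I) ∧
    (∀ p ∈ I, ∃ f : cells → S, (∀ C, f C ≠ 0 → dim C = 0) ∧ ε f = p) ∧
    (∀ f : cells → S, (∀ C, f C ≠ 0 → dim C = 0) → ε f = 0 →
      ∃ g : cells → S, (∀ C, g C ≠ 0 → dim C = 1) ∧ bdry g = f) := by
  classical
  intro S bdry ε I
  have hcoeff_eps : ∀ (f : cells → S) (b : Fin n →₀ ℕ),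
      MvPolynomial.coeff b (ε f)
        = ∑ v : cells, if dim v = 0 then bsStrand deg b f v else 0 := by
    intro f b
    show MvPolynomial.coeff b
        (∑ v : cells, if dim v = 0 then monomial (deg v) (1 : k) * f v else 0) = _
    rw [MvPolynomial.coeff_sum]
    refine Finset.sum_congr rfl fun v _ => ?_
    by_cases hv : dim v = 0
    · rw [if_pos hv, if_pos hv, MvPolynomial.coeff_monomial_mul', bsStrand]
      split_ifs with h
      · rw [one_mul]
      · rfl
    · rw [if_neg hv, if_neg hv, MvPolynomial.coeff_zero]
  refine ⟨?_, ?_, ?_, ?_⟩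
  · -- exactness in positive degrees
    intro i hi f hf hbf
    have hh : ∀ b : Fin n →₀ ℕ, ∃ gb : cells → k,
        (∀ C, gb C ≠ 0 → dim C = i + 1 ∧ deg C ≤ b) ∧
        ∀ D, (∑ C : cells, (α C D : k) * gb C) = bsStrand deg b f D := by
      intro b
      have hsup : ∀ C, bsStrand deg b f C ≠ 0 → dim C = i ∧ deg C ≤ b := by
        intro C hC
        obtain ⟨hfC, hle⟩ := bsStrand_ne_zero hC
        exact ⟨hf C hfC, hle⟩
      have hcyc : ∀ D, (∑ C : cells, (α C D : k) * bsStrand deg b f C) = 0 := by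
        intro D
        by_cases hDb : deg D ≤ b
        · rw [← bs_coeff_bdry deg hdvd f D b hDb]
          have h0 : (∑ C : cells, (α C D : ℤ) • (monomial (deg C - deg D) (1 : k) * f C))
              = 0 := congrFun hbf D
          rw [h0, MvPolynomial.coeff_zero]
        · exact bs_sum_eq_zero deg hdvd hDb _ fun C hC => (bsStrand_ne_zero hC).2
      exact (hacyclic b).1 i hi (bsStrand deg b f) hsup hcyc
    obtain ⟨g, hg1, hg2⟩ := bs_assemble (dim := dim) deg hdvd f (i + 1) hh
    exact ⟨g, hg1, funext hg2⟩
  · -- ε maps 0-chains into I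
    intro f hf
    show (∑ v : cells, if dim v = 0 then monomial (deg v) (1 : k) * f v else 0) ∈ I
    refine Ideal.sum_mem _ fun v _ => ?_
    by_cases hv : dim v = 0
    · rw [if_pos hv]
      exact Ideal.mul_mem_right _ _ (Ideal.subset_span ⟨v, hv, rfl⟩)
    · rw [if_neg hv]; exact Ideal.zero_mem _
  · -- ε is onto I
    intro p hp
    refine Submodule.span_induction ?_ ?_ ?_ ?_ hp
    · rintro x ⟨v, hv, rfl⟩
      refine ⟨fun C => if C = v then 1 else 0, ?_, ?_⟩
      · intro C hC
        by_cases h : C = v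
        · subst h; exact hv
        · exact absurd (if_neg h) hC
      · show (∑ w : cells, if dim w = 0
            then monomial (deg w) (1 : k) * (if w = v then 1 else 0) else 0)
          = monomial (deg v) (1 : k)
        rw [show (∑ w : cells, if dim w = 0
            then monomial (deg w) (1 : k) * (if w = v then (1 : S) else 0) else 0)
            = ∑ w : cells, if w = v then monomial (deg v) (1 : k) else 0 from
          Finset.sum_congr rfl fun w _ => by
            by_cases h : w = v
            · subst h; simp [hv]
            · simp [h]]
        simp
    · exact ⟨0, fun C hC => absurd rfl hC, by simp [ε]⟩
    · rintro x y hx hy ⟨fx, hfx1, hfx2⟩ ⟨fy, hfy1, hfy2⟩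
      refine ⟨fx + fy, ?_, ?_⟩
      · intro C hC
        by_cases h : fx C = 0
        · exact hfy1 C fun h' => hC (by simp [Pi.add_apply, h, h'])
        · exact hfx1 C h
      · show (∑ v : cells, if dim v = 0
            then monomial (deg v) (1 : k) * (fx v + fy v) else 0) = x + y
        rw [← hfx2, ← hfy2]
        show _ = (∑ v : cells, if dim v = 0 then monomial (deg v) (1 : k) * fx v else 0)
          + ∑ v : cells, if dim v = 0 then monomial (deg v) (1 : k) * fy v else 0
        rw [← Finset.sum_add_distrib]
        refine Finset.sum_congr rfl fun v _ => ?_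
        by_cases hv : dim v = 0
        · simp [hv, mul_add]
        · simp [hv]
    · rintro a x hx ⟨fx, hfx1, hfx2⟩
      refine ⟨fun C => a * fx C, ?_, ?_⟩
      · intro C hC
        exact hfx1 C fun h => hC (by simp [h])
      · show (∑ v : cells, if dim v = 0
            then monomial (deg v) (1 : k) * (a * fx v) else 0) = a • x
        rw [← hfx2, smul_eq_mul]
        show _ = a * ∑ v : cells, if dim v = 0 then monomial (deg v) (1 : k) * fx v else 0
        rw [Finset.mul_sum]
        refine Finset.sum_congr rfl fun v _ => ?_
        by_cases hv : dim v = 0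
        · simp [hv]; ring
        · simp [hv]
  · -- kernel of ε on 0-chains = boundaries
    intro f hf hef
    have hh : ∀ b : Fin n →₀ ℕ, ∃ gb : cells → k,
        (∀ C, gb C ≠ 0 → dim C = 1 ∧ deg C ≤ b) ∧
        ∀ D, (∑ C : cells, (α C D : k) * gb C) = bsStrand deg b f D := by
      intro b
      have hsup : ∀ C, bsStrand deg b f C ≠ 0 → dim C = 0 ∧ deg C ≤ b := by
        intro C hC
        obtain ⟨hfC, hle⟩ := bsStrand_ne_zero hC
        exact ⟨hf C hfC, hle⟩
      have hz : (∑ v : cells, if dim v = 0 then bsStrand deg b f v else 0) = 0 := by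
        rw [← hcoeff_eps f b, hef, MvPolynomial.coeff_zero]
      exact (hacyclic b).2.1 (bsStrand deg b f) hsup hz
    obtain ⟨g, hg1, hg2⟩ := bs_assemble (dim := dim) deg hdvd f 1 hh
    exact ⟨g, hg1, funext hg2⟩
end

section
/- With the hypotheses of the cellular resolution theorem (X a monomial-labeled combinatorial cell complex over a field with X_{⪯m} acyclic for all monomials m), if additionally m_C ≠ m_D for every pair of cells with α(C,D) ≠ 0, then the resolution F_•(X) is minimal, i.e., all entries of all differential matrices lie in the irrelevant maximal ideal of S. -/
open MvPolynomial

lemma mem_aux {n : ℕ} {k : Type*} [Field k] (m : Fin n →₀ ℕ) (hm : m ≠ 0) :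
    (monomial m (1 : k) : MvPolynomial (Fin n) k) ∈
      Ideal.span (Set.range (X : Fin n → MvPolynomial (Fin n) k)) := by
  obtain ⟨i, hi⟩ := Finsupp.ne_iff.mp hm
  simp only [Finsupp.coe_zero, Pi.zero_apply] at hi
  have h1 : Finsupp.single i 1 ≤ m := by
    intro j
    rcases eq_or_ne j i with rfl | hj
    · simpa using Nat.one_le_iff_ne_zero.mpr hi
    · simp [Finsupp.single_apply, Ne.symm hj]
  have : (monomial m (1 : k) : MvPolynomial (Fin n) k)
      = X i * monomial (m - Finsupp.single i 1) 1 := by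
    rw [X, monomial_mul, one_mul, add_tsub_cancel_of_le h1]
  rw [this]
  exact Ideal.mul_mem_right _ _ (Ideal.subset_span ⟨i, rfl⟩)

/-- Under the hypotheses of the cellular resolution theorem (a
monomial-labeled combinatorial cell complex X over a field with X_{⪯b} acyclic for all
monomials x^b), if additionally m_C ≠ m_D for every pair of cells with α(C,D) ≠ 0,
then the resolution F_•(X) is minimal: all entries α(C,D)·m_C/m_D of all differential
matrices lie in the irrelevant maximal ideal 𝔪 = ⟨x₁,…,x_n⟩ of S, so ∂F_i ⊆ 𝔪F_{i-1}. -/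
theorem stmt3 {cells : Type*} [Fintype cells] {n : ℕ} (k : Type*) [Field k]
    (dim : cells → ℕ) (α : cells → cells → ℤ) (deg : cells → (Fin n →₀ ℕ))
    (hα : ∀ C D, α C D ≠ 0 → dim D + 1 = dim C)
    (hcomp : ∀ A C, dim A = dim C + 2 → (∑ B : cells, α A B * α B C) = 0)
    (hdvd : ∀ C D, α C D ≠ 0 → deg D ≤ deg C)
    -- acyclicity of X_{⪯b} over k for every monomial x^b:
    (hacyclic : ∀ b : Fin n →₀ ℕ,
      (∀ i : ℕ, 1 ≤ i → ∀ f : cells → k,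
        (∀ C, f C ≠ 0 → dim C = i ∧ deg C ≤ b) →
        (∀ D, (∑ C : cells, (α C D : k) * f C) = 0) →
        ∃ g : cells → k, (∀ C, g C ≠ 0 → dim C = i + 1 ∧ deg C ≤ b) ∧
          ∀ D, (∑ C : cells, (α C D : k) * g C) = f D) ∧
      (∀ f : cells → k, (∀ C, f C ≠ 0 → dim C = 0 ∧ deg C ≤ b) →
        (∑ v : cells, if dim v = 0 then f v else 0) = 0 →
        ∃ g : cells → k, (∀ C, g C ≠ 0 → dim C = 1 ∧ deg C ≤ b) ∧
          ∀ D, (∑ C : cells, (α C D : k) * g C) = f D) ∧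
      ((∃ C, deg C ≤ b) → ∀ c : k, ∃ f : cells → k,
        (∀ C, f C ≠ 0 → dim C = 0 ∧ deg C ≤ b) ∧
        (∑ v : cells, if dim v = 0 then f v else 0) = c))
    -- additional hypothesis: no two incident cells share a label
    (hne : ∀ C D, α C D ≠ 0 → deg C ≠ deg D) :
    let S := MvPolynomial (Fin n) k
    let 𝔪 : Ideal S := Ideal.span (Set.range X)
    -- minimality: every entry of every differential matrix lies in 𝔪 …
    (∀ C D : cells, α C D ≠ 0 →
      (α C D : ℤ) • (monomial (deg C - deg D) (1 : k) : S) ∈ 𝔪) ∧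
    -- … equivalently, ∂F_i ⊆ 𝔪F_{i-1}
    (∀ f : cells → S, ∀ D : cells,
      (∑ C : cells, (α C D : ℤ) • (monomial (deg C - deg D) (1 : k) * f C)) ∈ 𝔪) := by
  intro S 𝔪
  have key : ∀ C D : cells, α C D ≠ 0 →
      (monomial (deg C - deg D) (1 : k) : S) ∈ 𝔪 := by
    intro C D h
    apply mem_aux
    intro h0
    apply hne C D h
    have hle := hdvd C D h
    have : deg C ≤ deg D := by
      intro j
      have := DFunLike.congr_fun h0 j
      simp only [Finsupp.coe_tsub, Pi.sub_apply, Finsupp.coe_zero, Pi.zero_apply] at this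
      omega
    exact le_antisymm this hle
  constructor
  · intro C D h
    rw [zsmul_eq_mul]
    exact Ideal.mul_mem_left _ _ (key C D h)
  · intro f D
    apply Ideal.sum_mem
    intro C _
    rcases eq_or_ne (α C D) 0 with h | h
    · simp [h]
    · rw [zsmul_eq_mul, ← mul_assoc]
      exact Ideal.mul_mem_right _ _ (Ideal.mul_mem_left _ _ (key C D h))
end

section
/- The Taylor complex of a monomial ideal I = ⟨m_1, …, m_r⟩ in a polynomial ring S over a field — i.e., the full simplex on r vertices with each face σ ⊆ {1,…,r} labeled by lcm{m_i : i ∈ σ} — supports a free resolution of S/I: the augmented cellular chain complex with F_i = ⊕_{|σ| = i+1} S(−deg lcm_σ) is exact in all positive degrees and has cokernel S/I at the end. -/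
open MvPolynomial

namespace Stmt4Aux
variable {r n : ℕ} {k : Type*} [Field k] (m : Fin r → (Fin n →₀ ℕ))

noncomputable def tL (σ : Finset (Fin r)) : Fin n →₀ ℕ := σ.sup m

noncomputable def tD (f : Finset (Fin r) → MvPolynomial (Fin n) k) (τ : Finset (Fin r)) :
    MvPolynomial (Fin n) k :=
  ∑ j : Fin r, if j ∉ τ then
    ((-1 : MvPolynomial (Fin n) k) ^ (((insert j τ).filter (fun x => x < j)).card))
      * monomial (tL m (insert j τ) - tL m τ) (1 : k) * f (insert j τ) else 0

lemma tL_mono {σ τ : Finset (Fin r)} (h : σ ⊆ τ) : tL m σ ≤ tL m τ :=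
  Finset.sup_mono h

lemma tL_le_insert (j : Fin r) (τ : Finset (Fin r)) : tL m τ ≤ tL m (insert j τ) :=
  tL_mono m (Finset.subset_insert j τ)

lemma tL_insert (j : Fin r) (τ : Finset (Fin r)) :
    tL m (insert j τ) = m j ⊔ tL m τ := Finset.sup_insert

lemma le_tL {j : Fin r} {σ : Finset (Fin r)} (h : j ∈ σ) : m j ≤ tL m σ :=
  Finset.le_sup h

lemma sign_card (j : Fin r) (s : Finset (Fin r)) :
    ((insert j s).filter (fun x => x < j)).card = (s.filter (fun x => x < j)).card := by
  rw [Finset.filter_insert, if_neg (lt_irrefl j)]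

lemma mono_mul (a d e : Fin n →₀ ℕ) (hde : d ≤ e) (hea : e ≤ a) (t : ℕ) (c : k) :
    ((-1 : MvPolynomial (Fin n) k)) ^ t * monomial (e - d) (1 : k) * monomial (a - e) c
      = monomial (a - d) ((-1 : k) ^ t * c) := by
  rw [show ((-1 : MvPolynomial (Fin n) k)) ^ t = C ((-1 : k) ^ t) by
    rw [map_pow, map_neg, map_one], mul_assoc, monomial_mul, one_mul, C_mul_monomial]
  congr 1
  rw [add_comm, tsub_add_tsub_cancel hea hde]

lemma strand (i : ℕ) (a : Fin n →₀ ℕ) (c : Finset (Fin r) → k)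
    (f : Finset (Fin r) → MvPolynomial (Fin n) k)
    (hf : ∀ σ, f σ = if tL m σ ≤ a then monomial (a - tL m σ) (c σ) else 0)
    (hc : ∀ σ, c σ ≠ 0 → tL m σ ≤ a ∧ σ.card = i + 1)
    (hcyc : tD m f = 0) :
    ∃ g : Finset (Fin r) → MvPolynomial (Fin n) k,
      (∀ τ, g τ ≠ 0 → τ.card = i + 2) ∧ tD m g = f := by
  classical
  by_cases hzero : ∀ σ, c σ = 0
  · refine ⟨0, by simp, ?_⟩
    have hf0 : f = 0 := funext fun σ => by rw [hf σ, hzero σ]; simp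
    rw [hf0]
    funext τ
    simp [tD]
  · push_neg at hzero
    obtain ⟨σ0, hσ0⟩ := hzero
    obtain ⟨hL0, hcard0⟩ := hc σ0 hσ0
    have hne : σ0.Nonempty := Finset.card_pos.mp (by omega)
    obtain ⟨j0, hj0⟩ := hne
    set V : Finset (Fin r) := Finset.univ.filter (fun j => m j ≤ a) with hV
    have hVne : V.Nonempty :=
      ⟨j0, by simp only [hV, Finset.mem_filter, Finset.mem_univ, true_and]
              exact le_trans (le_tL m hj0) hL0⟩
    set v := V.min' hVne with hv
    have hmv : m v ≤ a := by
      have := V.min'_mem hVne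
      simp only [hV, Finset.mem_filter, Finset.mem_univ, true_and] at this
      exact this
    have hminv : ∀ x, m x ≤ a → v ≤ x := fun x hx =>
      V.min'_le x (by simp only [hV, Finset.mem_filter, Finset.mem_univ, true_and]; exact hx)
    refine ⟨fun τ => if v ∈ τ ∧ tL m τ ≤ a then monomial (a - tL m τ) (c (τ.erase v)) else 0,
      ?_, ?_⟩
    · intro τ hτ
      dsimp only at hτ
      by_cases hcond : v ∈ τ ∧ tL m τ ≤ a
      · rw [if_pos hcond] at hτ
        have hcc : c (τ.erase v) ≠ 0 := fun h0 => hτ (by rw [h0]; simp)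
        have := (hc _ hcc).2
        have := Finset.card_erase_add_one hcond.1
        omega
      · rw [if_neg hcond] at hτ
        exact absurd rfl hτ
    · funext τ
      by_cases hvτ : v ∈ τ
      · -- case B
        by_cases hLτ : tL m τ ≤ a
        · set σ' := τ.erase v with hσ'
          have hτσ' : insert v σ' = τ := Finset.insert_erase hvτ
          have hvσ' : v ∉ σ' := Finset.notMem_erase v τ
          have hLσ' : tL m σ' ≤ a := le_trans (tL_mono m (Finset.erase_subset v τ)) hLτ
          have hτge : ∀ x ∈ τ, v ≤ x := fun x hx =>
            hminv x (le_trans (le_tL m hx) hLτ)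
          -- the k-valued coefficients of the cycle condition at σ'
          set u : Fin r → k := fun j =>
            if j ∉ σ' ∧ tL m (insert j σ') ≤ a
            then (-1 : k) ^ ((σ'.filter (fun x => x < j)).card) * c (insert j σ') else 0 with hu
          have hterm_u : ∀ j : Fin r,
              (if j ∉ σ' then
                ((-1 : MvPolynomial (Fin n) k) ^ (((insert j σ').filter (fun x => x < j)).card))
                  * monomial (tL m (insert j σ') - tL m σ') (1 : k) * f (insert j σ') else 0)
              = monomial (a - tL m σ') (u j) := by
            intro j
            by_cases hj : j ∉ σ'
            · rw [if_pos hj, hf (insert j σ')]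
              by_cases h2 : tL m (insert j σ') ≤ a
              · rw [if_pos h2, mono_mul a _ _ (tL_le_insert m j σ') h2, sign_card, hu]
                simp only [hj, h2, and_self, if_pos, not_false_iff, true_and]
              · rw [if_neg h2, mul_zero, hu]
                simp only [h2, and_false, if_false]
                simp
            · rw [if_neg hj, hu]
              simp only [hj, false_and, if_false, not_true]
              simp [hj]
          have hU : ∑ j : Fin r, u j = 0 := by
            have h0 : tD m f σ' = 0 := by rw [hcyc]; rfl
            rw [tD] at h0
            rw [Finset.sum_congr rfl (fun j _ => hterm_u j)] at h0
            rw [← map_sum] at h0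
            exact (monomial_eq_zero).mp h0
          have huv : u v = c τ := by
            rw [hu]
            have h1 : tL m (insert v σ') ≤ a := by rw [hτσ']; exact hLτ
            have h2 : σ'.filter (fun x => x < v) = ∅ :=
              Finset.filter_eq_empty_iff.mpr (fun x hx hlt =>
                absurd (hτge x (Finset.mem_of_mem_erase hx)) (not_le.mpr hlt))
            simp only [hvσ', h1, not_false_iff, and_self, if_pos, h2, Finset.card_empty,
              pow_zero, one_mul, hτσ', true_and]
            rw [if_pos hLτ]
          -- the k-valued coefficients of tD g at τ
          set w : Fin r → k := fun j =>
            if j ∉ τ ∧ tL m (insert j σ') ≤ a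
            then -((-1 : k) ^ ((σ'.filter (fun x => x < j)).card)) * c (insert j σ') else 0
            with hw
          have hterm_w : ∀ j : Fin r,
              (if j ∉ τ then
                ((-1 : MvPolynomial (Fin n) k) ^ (((insert j τ).filter (fun x => x < j)).card))
                  * monomial (tL m (insert j τ) - tL m τ) (1 : k)
                  * (if v ∈ insert j τ ∧ tL m (insert j τ) ≤ a then
                      monomial (a - tL m (insert j τ)) (c ((insert j τ).erase v)) else 0) else 0)
              = monomial (a - tL m τ) (w j) := by
            intro j
            by_cases hj : j ∉ τ
            · have hjv : j ≠ v := fun h => hj (h ▸ hvτ)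
              have hjσ' : j ∉ σ' := fun h => hj (Finset.mem_of_mem_erase h)
              have herase : (insert j τ).erase v = insert j σ' := by
                rw [Finset.erase_insert_of_ne hjv, hσ']
              have hins : insert j τ = insert v (insert j σ') := by
                rw [← hτσ', Finset.insert_comm]
              by_cases h2 : tL m (insert j τ) ≤ a
              · rw [if_pos hj, if_pos ⟨Finset.mem_insert_of_mem hvτ, h2⟩, herase,
                  mono_mul a _ _ (tL_le_insert m j τ) h2, sign_card]
                have h3 : tL m (insert j σ') ≤ a :=
                  le_trans (tL_mono m (by rw [hins]; exact Finset.subset_insert v _)) h2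
                rw [hw]
                simp only [hj, h3, not_false_iff, and_self, if_pos, true_and]
                by_cases hc0 : c (insert j σ') = 0
                · rw [hc0, mul_zero, mul_zero]
                · have hvj : v < j := lt_of_le_of_ne
                    (hminv j (le_trans (le_tL m (Finset.mem_insert_self j σ')) ((hc _ hc0).1)))
                    (Ne.symm hjv)
                  have hfilter : τ.filter (fun x => x < j)
                      = insert v (σ'.filter (fun x => x < j)) := by
                    rw [← hτσ', Finset.filter_insert, if_pos hvj]
                  have hvnot : v ∉ σ'.filter (fun x => x < j) :=
                    fun h => hvσ' (Finset.mem_of_mem_filter _ h)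
                  rw [hfilter, Finset.card_insert_of_notMem hvnot, pow_succ]
                  ring_nf
              · rw [if_pos hj]
                have h3 : ¬ tL m (insert j σ') ≤ a := fun hcon =>
                  h2 (by rw [hins, tL_insert]; exact sup_le hmv hcon)
                rw [hw]
                simp only [h3, and_false, if_false]
                simp only [h2, and_false, if_false, mul_zero]
                simp
            · rw [if_neg hj, hw]
              simp only [hj, false_and, if_false, not_true]
              simp [hj]
          have hsumw : ∑ j : Fin r, w j = c τ := by
            have hpair : ∑ j : Fin r, (w j + u j) = u v := by
              rw [Finset.sum_eq_single v]
              · rw [hw, hu]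
                simp only [hvτ, not_true, false_and, if_false, zero_add]
              · intro b _ hbv
                rw [hw, hu]
                by_cases hb : b ∉ τ
                · have hbσ : b ∉ σ' := fun h => hb (Finset.mem_of_mem_erase h)
                  simp only [hb, hbσ, not_false_iff, true_and]
                  split_ifs with h4
                  · ring
                  · ring
                · have hbσ : b ∈ σ' := Finset.mem_erase.mpr ⟨hbv, not_not.mp hb⟩
                  simp [hb, hbσ]
              · intro h; exact absurd (Finset.mem_univ v) h
            rw [Finset.sum_add_distrib, hU, add_zero] at hpair
            rw [hpair, huv]
          rw [tD, Finset.sum_congr rfl (fun j _ => hterm_w j), ← map_sum, hsumw,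
            hf τ, if_pos hLτ]
        · -- v ∈ τ, ¬ tL τ ≤ a : both sides 0
          rw [tD, hf τ, if_neg hLτ, Finset.sum_eq_zero]
          intro j _
          by_cases hj : j ∉ τ
          · rw [if_pos hj]
            have h2 : ¬ (v ∈ insert j τ ∧ tL m (insert j τ) ≤ a) := fun hcon =>
              hLτ (le_trans (tL_le_insert m j τ) hcon.2)
            rw [if_neg h2, mul_zero]
          · rw [if_neg hj]
      · -- case A : v ∉ τ
        rw [tD, hf τ, Finset.sum_eq_single v]
        · rw [if_pos hvτ]
          have herase : (insert v τ).erase v = τ := Finset.erase_insert hvτ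
          by_cases hcτ : c τ = 0
          · rw [herase, hcτ]
            simp
          · obtain ⟨hLτ, -⟩ := hc τ hcτ
            have hLvτ : tL m (insert v τ) ≤ a := by rw [tL_insert]; exact sup_le hmv hLτ
            have hsig : ((insert v τ).filter (fun x => x < v)).card = 0 := by
              rw [sign_card, Finset.card_eq_zero]
              exact Finset.filter_eq_empty_iff.mpr (fun x hx hlt =>
                absurd (hminv x (le_trans (le_tL m hx) hLτ)) (not_le.mpr hlt))
            rw [herase, if_pos ⟨Finset.mem_insert_self v τ, hLvτ⟩, if_pos hLτ, hsig,
              mono_mul a _ _ (tL_le_insert m v τ) hLvτ 0 (c τ), pow_zero, one_mul]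
        · intro b _ hbv
          by_cases hb : b ∉ τ
          · rw [if_pos hb]
            have h2 : ¬ (v ∈ insert b τ ∧ tL m (insert b τ) ≤ a) := fun hcon => by
              rcases Finset.mem_insert.mp hcon.1 with h | h
              · exact hbv h.symm
              · exact hvτ h
            rw [if_neg h2, mul_zero]
          · rw [if_neg hb]
        · intro h; exact absurd (Finset.mem_univ v) h

/-- multidegree-a strand projection -/
noncomputable def pc (a : Fin n →₀ ℕ) (f : Finset (Fin r) → MvPolynomial (Fin n) k) :
    Finset (Fin r) → MvPolynomial (Fin n) k :=
  fun σ => if tL m σ ≤ a then monomial (a - tL m σ) (coeff (a - tL m σ) (f σ)) else 0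

lemma pc_ne_zero {a : Fin n →₀ ℕ} {f : Finset (Fin r) → MvPolynomial (Fin n) k}
    {σ : Finset (Fin r)} (h : pc m a f σ ≠ 0) : f σ ≠ 0 := by
  intro h0
  apply h
  simp [pc, h0]

lemma sum_pc (f : Finset (Fin r) → MvPolynomial (Fin n) k) (A : Finset (Fin n →₀ ℕ))
    (hA : ∀ σ, ((f σ).support.image (· + tL m σ)) ⊆ A) (σ : Finset (Fin r)) :
    ∑ a ∈ A, pc m a f σ = f σ := by
  classical
  have h1 : ∑ a ∈ (f σ).support.image (· + tL m σ), pc m a f σ = f σ := by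
    rw [Finset.sum_image (fun x _ y _ h => by
      exact add_right_cancel h)]
    conv_rhs => rw [← support_sum_monomial_coeff (f σ)]
    apply Finset.sum_congr rfl
    intro b hb
    have : tL m σ ≤ b + tL m σ := le_add_self
    simp [pc, this, add_tsub_cancel_right]
  rw [← h1]
  symm
  apply Finset.sum_subset (hA σ)
  intro a _ ha
  rw [pc]
  split_ifs with h
  · rw [monomial_eq_zero]
    by_contra hc
    exact ha (Finset.mem_image.mpr ⟨a - tL m σ, by
      simpa [MvPolynomial.mem_support_iff] using hc, tsub_add_cancel_of_le h⟩)
  · rfl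

lemma tD_pc (a : Fin n →₀ ℕ) (f : Finset (Fin r) → MvPolynomial (Fin n) k) :
    tD m (pc m a f) = pc m a (tD m f) := by
  classical
  funext τ
  by_cases h : tL m τ ≤ a
  · simp only [tD, pc, if_pos h, coeff_sum, map_sum]
    apply Finset.sum_congr rfl
    intro j _
    by_cases hj : j ∉ τ
    · simp only [if_pos hj]
      set t := (((insert j τ).filter (fun x => x < j)).card)
      have hle : tL m τ ≤ tL m (insert j τ) := tL_le_insert m j τ
      rw [show ((-1 : MvPolynomial (Fin n) k)) ^ t = C ((-1 : k) ^ t) by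
        rw [map_pow, map_neg, map_one]]
      rw [mul_assoc, mul_assoc, coeff_C_mul, coeff_monomial_mul']
      by_cases h2 : tL m (insert j τ) ≤ a
      · have hd : tL m (insert j τ) - tL m τ ≤ a - tL m τ := tsub_le_tsub_right h2 _
        have he : (tL m (insert j τ) - tL m τ) + (a - tL m (insert j τ)) = a - tL m τ := by
          rw [add_comm]; exact tsub_add_tsub_cancel h2 hle
        rw [if_pos h2, if_pos hd, tsub_tsub_tsub_cancel_right hle, one_mul,
          monomial_mul, one_mul, C_mul_monomial, he]
      · have hd : ¬ (tL m (insert j τ) - tL m τ ≤ a - tL m τ) := by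
          intro hc
          apply h2
          calc tL m (insert j τ) = tL m τ + (tL m (insert j τ) - tL m τ) :=
                (add_tsub_cancel_of_le hle).symm
            _ ≤ tL m τ + (a - tL m τ) := add_le_add_right hc _
            _ = a := add_tsub_cancel_of_le h
        rw [if_neg h2, if_neg hd]
        simp
    · simp only [if_neg hj, coeff_zero, monomial_zero]
  · simp only [tD, pc, if_neg h]
    rw [Finset.sum_eq_zero]
    intro j _
    by_cases hj : j ∉ τ
    · rw [if_pos hj]
      have h2 : ¬ tL m (insert j τ) ≤ a := fun hc => h (le_trans (tL_le_insert m j τ) hc)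
      rw [if_neg h2, mul_zero]
    · rw [if_neg hj]


lemma tD_sumfun {α : Type*} [DecidableEq α] (A : Finset α)
    (g : α → Finset (Fin r) → MvPolynomial (Fin n) k) :
    tD m (fun τ => ∑ a ∈ A, g a τ) = fun τ => ∑ a ∈ A, tD m (g a) τ := by
  funext τ
  simp only [tD]
  rw [Finset.sum_comm]
  apply Finset.sum_congr rfl
  intro j _
  by_cases hj : j ∉ τ
  · rw [if_pos hj, Finset.mul_sum]
    apply Finset.sum_congr rfl
    intro a _
    rw [if_pos hj]
  · rw [if_neg hj, Finset.sum_congr rfl (fun a (_ : a ∈ A) => if_neg hj), Finset.sum_const_zero]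

lemma resolve (i : ℕ) (f : Finset (Fin r) → MvPolynomial (Fin n) k)
    (hf : ∀ σ, f σ ≠ 0 → σ.card = i + 1) (hcyc : tD m f = 0) :
    ∃ g, (∀ σ, g σ ≠ 0 → σ.card = i + 2) ∧ tD m g = f := by
  classical
  have hstr : ∀ a : Fin n →₀ ℕ,
      ∃ g, (∀ τ, g τ ≠ 0 → τ.card = i + 2) ∧ tD m g = pc m a f := by
    intro a
    apply strand m i a (fun σ => if tL m σ ≤ a then coeff (a - tL m σ) (f σ) else 0)
    · intro σ
      simp only [pc]
      split_ifs with h <;> rfl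
    · intro σ hcσ
      by_cases h : tL m σ ≤ a
      · exact ⟨h, hf σ (fun h0 => hcσ (by rw [if_pos h, h0, coeff_zero]))⟩
      · rw [if_neg h] at hcσ; exact absurd rfl hcσ
    · rw [tD_pc, hcyc]
      funext τ
      simp [pc]
  choose G hG1 hG2 using hstr
  set A : Finset (Fin n →₀ ℕ) :=
    Finset.univ.biUnion (fun σ : Finset (Fin r) => (f σ).support.image (· + tL m σ)) with hA
  refine ⟨fun τ => ∑ a ∈ A, G a τ, ?_, ?_⟩
  · intro σ hσ
    have : ∃ a ∈ A, G a σ ≠ 0 := by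
      by_contra h
      push_neg at h
      exact hσ (Finset.sum_eq_zero h)
    obtain ⟨a, -, ha⟩ := this
    exact hG1 a σ ha
  · rw [tD_sumfun]
    funext τ
    rw [Finset.sum_congr rfl (fun a _ => by rw [hG2 a])]
    apply sum_pc
    intro σ
    exact Finset.subset_biUnion_of_mem
      (fun σ : Finset (Fin r) => (f σ).support.image (· + tL m σ)) (Finset.mem_univ σ)

lemma eps_tD (f : Finset (Fin r) → MvPolynomial (Fin n) k) :
    ∑ j : Fin r, monomial (m j) (1 : k) * tD m f {j} = 0 := by
  classical
  set W : Fin r × Fin r → MvPolynomial (Fin n) k := fun p =>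
    if p.1 ≠ p.2 then
      (if p.2 < p.1 then (-1 : MvPolynomial (Fin n) k) else 1)
        * monomial (tL m {p.1, p.2}) (1 : k) * f {p.1, p.2} else 0 with hW
  have hterm : ∀ j : Fin r, monomial (m j) (1 : k) * tD m f {j}
      = ∑ i : Fin r, W (i, j) := by
    intro j
    rw [tD, Finset.mul_sum]
    apply Finset.sum_congr rfl
    intro b _
    by_cases hb : b ∉ ({j} : Finset (Fin r))
    · have hbj : b ≠ j := by simpa using hb
      rw [if_pos hb, hW]
      simp only [ne_eq, hbj, not_false_iff, if_true, if_pos]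
      have h1 : tL m ({j} : Finset (Fin r)) = m j := Finset.sup_singleton
      have h2 : m j ≤ tL m ({b, j} : Finset (Fin r)) :=
        le_tL m (Finset.mem_insert_of_mem (Finset.mem_singleton_self j))
      have h3 : (((insert b {j} : Finset (Fin r))).filter (fun x => x < b)).card
          = if j < b then 1 else 0 := by
        rw [sign_card, Finset.filter_singleton]
        split_ifs <;> simp
      rw [h3, h1]
      have h4 : monomial (m j) (1 : k) * monomial (tL m ({b, j} : Finset (Fin r)) - m j) (1 : k)
          = monomial (tL m ({b, j} : Finset (Fin r))) (1 : k) := by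
        rw [monomial_mul, one_mul, add_tsub_cancel_of_le h2]
      calc monomial (m j) (1 : k) * ((-1) ^ (if j < b then 1 else 0)
              * monomial (tL m ({b, j} : Finset (Fin r)) - m j) (1 : k) * f {b, j})
          = ((-1) ^ (if j < b then 1 else 0))
              * (monomial (m j) (1:k) * monomial (tL m ({b, j} : Finset (Fin r)) - m j) (1 : k))
              * f {b, j} := by ring
        _ = (if j < b then (-1 : MvPolynomial (Fin n) k) else 1)
              * monomial (tL m ({b, j} : Finset (Fin r))) (1 : k) * f {b, j} := by
            rw [h4]
            congr 2
            split_ifs <;> simp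
    · rw [if_neg hb, hW]
      have hbj : b = j := by simpa using hb
      simp [hbj]
  rw [Finset.sum_congr rfl (fun j _ => hterm j), Finset.sum_comm]
  have : ∑ i : Fin r, ∑ j : Fin r, W (i, j) = ∑ p ∈ Finset.univ ×ˢ Finset.univ, W p := by
    rw [Finset.sum_product]
  rw [this]
  apply Finset.sum_involution (fun p _ => (p.2, p.1))
  · intro p _
    rcases eq_or_ne p.1 p.2 with h | h
    · rw [hW]
      simp [h]
    · have hpair : ({p.2, p.1} : Finset (Fin r)) = {p.1, p.2} := Finset.pair_comm p.2 p.1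
      rw [hW]
      simp only [ne_eq, h, not_false_iff, if_true, Ne.symm h, hpair, if_pos]
      rcases h.lt_or_gt with hlt | hlt
      · rw [if_pos hlt, if_neg (not_lt.mpr hlt.le)]
        ring
      · rw [if_neg (not_lt.mpr hlt.le), if_pos hlt]
        ring
  · intro p _ hp
    intro hcon
    apply hp
    rw [hW]
    have : p.1 = p.2 := by
      have := congrArg Prod.fst hcon
      simp at this
      exact this.symm
    simp [this]
  · intro p _; exact Finset.mem_product.mpr ⟨Finset.mem_univ _, Finset.mem_univ _⟩
  · intro p _; rfl

lemma tD_deg0 (f : Finset (Fin r) → MvPolynomial (Fin n) k)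
    (hf : ∀ σ, f σ ≠ 0 → σ.card = 1)
    (heps : ∑ j : Fin r, monomial (m j) (1 : k) * f {j} = 0) : tD m f = 0 := by
  classical
  funext τ
  rcases Finset.eq_empty_or_nonempty τ with h | h
  · subst h
    show tD m f ∅ = 0
    rw [tD, ← heps]
    apply Finset.sum_congr rfl
    intro j _
    rw [if_pos (Finset.notMem_empty j)]
    have h1 : ((insert j (∅ : Finset (Fin r))).filter (fun x => x < j)).card = 0 := by
      rw [sign_card]
      simp
    have h2 : tL m (∅ : Finset (Fin r)) = 0 := by
      simp [tL]
      rfl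
    have h3 : tL m ({j} : Finset (Fin r)) = m j := Finset.sup_singleton
    rw [h1, h2, pow_zero, one_mul, tsub_zero]
    show monomial (tL m ({j} : Finset (Fin r))) (1:k) * f {j} = _
    rw [h3]
  · show tD m f τ = 0
    rw [tD]
    apply Finset.sum_eq_zero
    intro j _
    by_cases hj : j ∉ τ
    · rw [if_pos hj]
      have h0 : f (insert j τ) = 0 := by
        by_contra h0
        have hc := hf _ h0
        rw [Finset.card_insert_of_notMem hj] at hc
        have := Finset.card_pos.mpr h
        omega
      rw [h0, mul_zero]
    · rw [if_neg hj]

end Stmt4Aux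

/-- The Taylor complex of I = ⟨m₁,…,m_r⟩ ⊆ S = k[x₁,…,x_n] — the full
simplex on r vertices with face σ labeled lcm{m_i : i ∈ σ} — supports a free
resolution of S/I: the augmented cellular chain complex (F_i = ⊕_{|σ|=i+1} S·e_σ,
∂ e_σ = Σ_{i∈σ} sign(i,σ)(lcm_σ/lcm_{σ∖i}) e_{σ∖i}, augmentation e_{i} ↦ m_i) is
exact in all positive degrees and has cokernel S/I at the end. -/
theorem stmt4 {r n : ℕ} (k : Type*) [Field k] (m : Fin r → (Fin n →₀ ℕ)) :
    let S := MvPolynomial (Fin n) k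
    let lcm : Finset (Fin r) → (Fin n →₀ ℕ) := fun σ => σ.sup m
    let sgn : Fin r → Finset (Fin r) → S :=
      fun j σ => (-1 : S) ^ (σ.filter (fun x => x < j)).card
    let bdry : (Finset (Fin r) → S) → (Finset (Fin r) → S) :=
      fun f τ => ∑ j : Fin r, if j ∉ τ then
        sgn j (insert j τ) * monomial (lcm (insert j τ) - lcm τ) (1 : k)
          * f (insert j τ) else 0
    let chains : ℕ → Set (Finset (Fin r) → S) :=
      fun i => {f | ∀ σ, f σ ≠ 0 → σ.card = i + 1}
    let ε : (Finset (Fin r) → S) → S := fun f => ∑ j : Fin r, monomial (m j) (1 : k) * f {j}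
    let I : Ideal S := Ideal.span (Set.range fun j => (monomial (m j) (1 : k) : S))
    -- exactness in positive homological degrees
    (∀ i : ℕ, 1 ≤ i → ∀ f ∈ chains i, bdry f = 0 →
      ∃ g ∈ chains (i + 1), bdry g = f) ∧
    -- exactness at homological degree 0 of the augmented complex
    (∀ f ∈ chains 1, ε (bdry f) = 0) ∧
    (∀ f ∈ chains 0, ε f = 0 → ∃ g ∈ chains 1, bdry g = f) ∧
    -- the cokernel at the end is S/I: the augmentation maps F₀ into and onto I
    (∀ f ∈ chains 0, ε f ∈ I) ∧
    (∀ p ∈ I, ∃ f ∈ chains 0, ε f = p) := by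
  intro S lcm sgn bdry chains ε I
  refine ⟨?_, ?_, ?_, ?_, ?_⟩
  · intro i _ f hf hcyc
    obtain ⟨g, hg1, hg2⟩ := Stmt4Aux.resolve m i f hf hcyc
    exact ⟨g, hg1, hg2⟩
  · intro f _
    exact Stmt4Aux.eps_tD m f
  · intro f hf heps
    have h0 : Stmt4Aux.tD m f = 0 := Stmt4Aux.tD_deg0 m f hf heps
    obtain ⟨g, hg1, hg2⟩ := Stmt4Aux.resolve m 0 f hf h0
    exact ⟨g, hg1, hg2⟩
  · intro f _
    apply Ideal.sum_mem
    intro j _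
    exact Ideal.mul_mem_right _ _ (Ideal.subset_span ⟨j, rfl⟩)
  · intro p hp
    classical
    obtain ⟨co, hco⟩ := (Submodule.mem_span_range_iff_exists_fun _).mp hp
    refine ⟨fun σ => ∑ j : Fin r, if σ = {j} then co j else 0, ?_, ?_⟩
    · intro σ hσ
      have : ∃ j : Fin r, σ = {j} := by
        by_contra hcon
        push_neg at hcon
        exact hσ (Finset.sum_eq_zero fun j _ => if_neg (hcon j))
      obtain ⟨j, rfl⟩ := this
      exact Finset.card_singleton j
    · have hfj : ∀ j : Fin r,
          (∑ j' : Fin r, if ({j} : Finset (Fin r)) = {j'} then co j' else 0) = co j := by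
        intro j
        rw [Finset.sum_eq_single j]
        · rw [if_pos rfl]
        · intro b _ hb
          exact if_neg (fun h => hb (Finset.singleton_inj.mp h).symm)
        · intro h; exact absurd (Finset.mem_univ j) h
      calc ∑ j : Fin r, monomial (m j) (1 : k)
              * (∑ j' : Fin r, if ({j} : Finset (Fin r)) = {j'} then co j' else 0)
          = ∑ j : Fin r, monomial (m j) (1 : k) * co j :=
            Finset.sum_congr rfl fun j _ => by rw [hfj j]
        _ = p := by
            rw [← hco]
            exact Finset.sum_congr rfl fun j _ => by rw [smul_eq_mul, mul_comm]
end
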